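/- arXiv:0806.3503 — 4 statements merged into one kernel-verified Lean document; each statement's English description precedes it below -/
import Mathlib

section
/- Let H be a complex Hilbert space, q ∈ (0,1), and A : H → H a bounded linear operator satisfying A*A = 1 + q·A·A*. Then ‖A‖² ≤ 1/(1-q). -/
open ContinuousLinearMap

theorem stmt_0 {H : Type*} [NormedAddCommGroup H] [InnerProductSpace ℂ H]
    [CompleteSpace H] (q : ℝ) (hq0 : 0 < q) (hq1 : q < 1)
    (A : H →L[ℂ] H)
    (hA : adjoint A * A = 1 + q • (A * adjoint A)) :
    ‖A‖ ^ 2 ≤ 1 / (1 - q) := by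
  have h1 : ‖adjoint A * A‖ = ‖A‖ * ‖A‖ := norm_adjoint_comp_self A
  have h2 : ‖adjoint A * A‖ ≤ 1 + q * (‖A‖ * ‖A‖) := by
    rw [hA]
    calc ‖(1 : H →L[ℂ] H) + q • (A * adjoint A)‖
        ≤ ‖(1 : H →L[ℂ] H)‖ + ‖q • (A * adjoint A)‖ := norm_add_le _ _
      _ ≤ 1 + q * (‖A‖ * ‖A‖) := by
          have h3 : ‖q • (A * adjoint A)‖ = q * ‖A * adjoint A‖ := by
            rw [norm_smul, Real.norm_of_nonneg hq0.le]
          have h4 : ‖A * adjoint A‖ ≤ ‖A‖ * ‖adjoint A‖ := norm_mul_le _ _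
          rw [LinearIsometryEquiv.norm_map adjoint A] at h4
          have h5 : ‖(1 : H →L[ℂ] H)‖ ≤ 1 := norm_id_le
          nlinarith
  rw [h1] at h2
  rw [le_div_iff₀ (by linarith : (0:ℝ) < 1 - q)]
  nlinarith [norm_nonneg A]
end

section
/- Let H be a complex Hilbert space, S an isometry on H (S*S = 1), q ∈ (0,1), and T = Σ_{n=0}^∞ qⁿ Sⁿ(S*)ⁿ (converging in norm). Then the operator A = S·T^{1/2} satisfies the q-CCR relation A*A = 1 + q·A·A*. -/
/-!
Shifting the index in the series gives `T = 1 + q S T S*`, and `T ≥ 0` as a sum of positive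
terms, so `C = T^{1/2}` is selfadjoint with `C² = T`. Then `A*A = C S*S C = T` and
`1 + q AA* = 1 + q S C² S* = 1 + q S T S*`.
-/

open ContinuousLinearMap

lemma star_pow_mul_pow_of_star_mul_self {R : Type*} [Monoid R] [StarMul R] {s : R}
    (hs : star s * s = 1) (n : ℕ) : star (s ^ n) * s ^ n = 1 := by
  induction n with
  | zero => simp
  | succ n ih =>
    rw [pow_succ', star_mul, mul_assoc, ← mul_assoc (star s), hs, one_mul, ih]

section CStarAlgebra

variable {A : Type*} [CStarAlgebra A]

lemma norm_pow_mul_star_pow_of_star_mul_self {s : A} (hs : star s * s = 1) (n : ℕ) :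
    ‖s ^ n * star s ^ n‖ = ‖(1 : A)‖ := by
  rw [← star_pow, CStarRing.norm_self_mul_star, ← CStarRing.norm_star_mul_self,
    star_pow_mul_pow_of_star_mul_self hs]

lemma summable_smul_pow_mul_star_pow {q : ℝ} (hq0 : 0 ≤ q) (hq1 : q < 1) {s : A}
    (hs : star s * s = 1) : Summable fun n : ℕ ↦ q ^ n • (s ^ n * star s ^ n) :=
  .of_norm <| by
    simpa only [norm_smul, norm_pow_mul_star_pow_of_star_mul_self hs, Real.norm_eq_abs,
      abs_pow, abs_of_nonneg hq0] using
      (summable_geometric_of_lt_one hq0 hq1).mul_right ‖(1 : A)‖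

variable [PartialOrder A] [StarOrderedRing A]

lemma tsum_smul_pow_mul_star_pow_nonneg {q : ℝ} (hq0 : 0 ≤ q) (s : A) :
    0 ≤ ∑' n : ℕ, q ^ n • (s ^ n * star s ^ n) :=
  tsum_nonneg fun n ↦ by
    rw [← star_pow]
    exact smul_nonneg (pow_nonneg hq0 n) (mul_star_self_nonneg _)

lemma cfc_sqrt_mul_self {a : A} (ha : 0 ≤ a) : cfc Real.sqrt a * cfc Real.sqrt a = a := by
  rw [← cfcₙ_eq_cfc, ← CFC.sqrt_eq_real_sqrt a ha, CFC.sqrt_mul_sqrt_self a ha]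

end CStarAlgebra

lemma tsum_smul_pow_mul_pow_eq_one_add {𝕜 R : Type*} [CommSemiring 𝕜] [Ring R] [Algebra 𝕜 R]
    [TopologicalSpace R] [IsTopologicalRing R] [T2Space R] [ContinuousConstSMul 𝕜 R]
    {q : 𝕜} {a b : R} (h : Summable fun n : ℕ ↦ q ^ n • (a ^ n * b ^ n)) :
    ∑' n : ℕ, q ^ n • (a ^ n * b ^ n) =
      1 + q • (a * (∑' n : ℕ, q ^ n • (a ^ n * b ^ n)) * b) := by
  have hshift (n : ℕ) : q ^ (n + 1) • (a ^ (n + 1) * b ^ (n + 1)) =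
      q • (a * (q ^ n • (a ^ n * b ^ n)) * b) := by
    rw [pow_succ', pow_succ', pow_succ, mul_smul_comm, smul_mul_assoc, smul_smul, mul_assoc,
      mul_assoc, mul_assoc]
  conv_lhs => rw [h.tsum_eq_zero_add]
  rw [← h.tsum_mul_left a, ← (h.mul_left a).tsum_mul_right b,
    ← ((h.mul_left a).mul_right b).tsum_const_smul q]
  simp [hshift]

lemma star_mul_self_eq_one_add_smul_mul_star {𝕜 R : Type*} [Ring R] [StarRing R] [SMul 𝕜 R]
    {q : 𝕜} {s c t : R} (hs : star s * s = 1) (hc : IsSelfAdjoint c) (hct : c * c = t)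
    (ht : t = 1 + q • (s * t * star s)) :
    star (s * c) * (s * c) = 1 + q • (s * c * star (s * c)) := by
  rw [star_mul, hc.star_eq]
  calc c * star s * (s * c) = c * (star s * s) * c := by simp only [mul_assoc]
    _ = t := by rw [hs, mul_one, hct]
    _ = 1 + q • (s * c * (c * star s)) := by
      conv_lhs => rw [ht, ← hct]
      simp only [mul_assoc]

theorem stmt_7 {H : Type*} [NormedAddCommGroup H] [InnerProductSpace ℂ H]
    [CompleteSpace H] (q : ℝ) (hq0 : 0 < q) (hq1 : q < 1)
    (S : H →L[ℂ] H) (hS : adjoint S * S = 1)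
    (T : H →L[ℂ] H) (hT : T = ∑' n : ℕ, q ^ n • (S ^ n * (adjoint S) ^ n))
    (A : H →L[ℂ] H) (hA : A = S * cfc Real.sqrt T) :
    adjoint A * A = 1 + q • (A * adjoint A) := by
  rw [← star_eq_adjoint] at hS hT
  rw [hA, ← star_eq_adjoint]
  have hT0 : 0 ≤ T := hT ▸ tsum_smul_pow_mul_star_pow_nonneg hq0.le S
  refine star_mul_self_eq_one_add_smul_mul_star hS (cfc_predicate _ T) (cfc_sqrt_mul_self hT0) ?_
  subst hT
  exact tsum_smul_pow_mul_pow_eq_one_add (summable_smul_pow_mul_star_pow hq0.le hq1 hS)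
end

section
/- Let q ∈ (0,1), x > 1/(1-q), and let D ⊆ ℓ²(ℤ) be the dense subspace of finitely supported sequences. Define A on D by A e_n = √((1-qⁿ)/(1-q) + qⁿx) e_{n+1} for n ∈ ℤ (with respect to the standard basis). Then A maps D to D, its formal adjoint A† (given by A† e_{n+1} = √((1-qⁿ)/(1-q) + qⁿx) e_n) maps D to D, and on D one has A†A = 1 + q·A·A†. Moreover A is unbounded: sup_n ‖A e_n‖ = ∞. -/
open scoped ComplexConjugate

theorem stmt_14 (q : ℝ) (hq0 : 0 < q) (hq1 : q < 1) (x : ℝ)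
    (hx : 1 / (1 - q) < x)
    (D : Submodule ℂ (lp (fun _ : ℤ => ℂ) 2))
    (hD : D = Submodule.span ℂ (Set.range fun n : ℤ => lp.single 2 n (1 : ℂ)))
    (A A' : D →ₗ[ℂ] lp (fun _ : ℤ => ℂ) 2)
    (hA : ∀ (n : ℤ) (hn : lp.single 2 n (1 : ℂ) ∈ D),
      A ⟨lp.single 2 n (1 : ℂ), hn⟩ =
        ((Real.sqrt ((1 - q ^ n) / (1 - q) + q ^ n * x) : ℝ) : ℂ) •
          lp.single 2 (n + 1) (1 : ℂ))
    (hA' : ∀ (n : ℤ) (hn : lp.single 2 (n + 1) (1 : ℂ) ∈ D),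
      A' ⟨lp.single 2 (n + 1) (1 : ℂ), hn⟩ =
        ((Real.sqrt ((1 - q ^ n) / (1 - q) + q ^ n * x) : ℝ) : ℂ) •
          lp.single 2 n (1 : ℂ)) :
    (∀ v : D, A v ∈ D) ∧ (∀ v : D, A' v ∈ D) ∧
    (∀ (v : D) (hAv : A v ∈ D) (hA'v : A' v ∈ D),
      A' ⟨A v, hAv⟩ = (v : lp (fun _ : ℤ => ℂ) 2) + q • A ⟨A' v, hA'v⟩) ∧
    (∀ C : ℝ, ∃ (n : ℤ) (hn : lp.single 2 n (1 : ℂ) ∈ D),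
      C < ‖A ⟨lp.single 2 n (1 : ℂ), hn⟩‖) := by
  have h1q : (0:ℝ) < 1 - q := by linarith
  set lam : ℤ → ℝ := fun n => (1 - q ^ n) / (1 - q) + q ^ n * x with hlamdef
  have hlam_eq : ∀ n : ℤ, lam n = 1 / (1 - q) + q ^ n * (x - 1 / (1 - q)) := by
    intro n
    simp only [hlamdef]
    field_simp
    ring
  have hlam_pos : ∀ n : ℤ, 0 < lam n := by
    intro n
    rw [hlam_eq]
    have h1 : 0 < q ^ n := zpow_pos hq0 n
    have h2 : 0 < x - 1 / (1 - q) := by linarith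
    positivity
  have hrec : ∀ n : ℤ, lam n = 1 + q * lam (n - 1) := by
    intro n
    have hz : q ^ n = q ^ (n - 1) * q := by
      rw [← zpow_add_one₀ hq0.ne', sub_add_cancel]
    simp only [hlamdef, hz]
    field_simp
    ring
  have hmem : ∀ n : ℤ, lp.single 2 n (1 : ℂ) ∈ D := by
    intro n
    rw [hD]
    exact Submodule.subset_span ⟨n, rfl⟩
  -- Part 1
  have key1 : ∀ v : D, A v ∈ D := by
    rintro ⟨v, hv⟩
    rw [hD] at hv
    induction hv using Submodule.span_induction with
    | mem y hy =>
        obtain ⟨n, rfl⟩ := hy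
        rw [hA n (hmem n)]
        exact Submodule.smul_mem _ _ (hmem (n + 1))
    | zero =>
        have : (⟨0, (hD ▸ Submodule.zero_mem _ : (0:lp (fun _ : ℤ => ℂ) 2) ∈ D)⟩ : D) = 0 := rfl
        rw [this, map_zero]; exact Submodule.zero_mem _
    | add y z hy hz ihy ihz =>
        have : (⟨y + z, _⟩ : D) = ⟨y, hD ▸ hy⟩ + ⟨z, hD ▸ hz⟩ := rfl
        rw [this, map_add]
        exact Submodule.add_mem _ (ihy _) (ihz _)
    | smul c y hy ihy =>
        have : (⟨c • y, _⟩ : D) = c • ⟨y, hD ▸ hy⟩ := rfl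
        rw [this, map_smul]
        exact Submodule.smul_mem _ _ (ihy _)

  -- A' on basis vectors
  have hA'e : ∀ (n : ℤ) (hn : lp.single 2 n (1 : ℂ) ∈ D),
      A' ⟨lp.single 2 n (1 : ℂ), hn⟩ =
        ((Real.sqrt (lam (n - 1)) : ℝ) : ℂ) • lp.single 2 (n - 1) (1 : ℂ) := by
    intro n hn
    obtain ⟨m, rfl⟩ : ∃ m, n = m + 1 := ⟨n - 1, (sub_add_cancel n 1).symm⟩
    rw [hA' m hn, add_sub_cancel_right]
  -- Part 2
  have key2 : ∀ v : D, A' v ∈ D := by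
    rintro ⟨v, hv⟩
    rw [hD] at hv
    induction hv using Submodule.span_induction with
    | mem y hy =>
        obtain ⟨n, rfl⟩ := hy
        rw [hA'e n (hmem n)]
        exact Submodule.smul_mem _ _ (hmem (n - 1))
    | zero =>
        have : (⟨0, (hD ▸ Submodule.zero_mem _ : (0:lp (fun _ : ℤ => ℂ) 2) ∈ D)⟩ : D) = 0 := rfl
        rw [this, map_zero]; exact Submodule.zero_mem _
    | add y z hy hz ihy ihz =>
        have : (⟨y + z, _⟩ : D) = ⟨y, hD ▸ hy⟩ + ⟨z, hD ▸ hz⟩ := rfl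
        rw [this, map_add]
        exact Submodule.add_mem _ (ihy _) (ihz _)
    | smul c y hy ihy =>
        have : (⟨c • y, _⟩ : D) = c • ⟨y, hD ▸ hy⟩ := rfl
        rw [this, map_smul]
        exact Submodule.smul_mem _ _ (ihy _)
  -- Part 3
  set Ar : D →ₗ[ℂ] D := A.codRestrict D key1 with hAr
  set Ar' : D →ₗ[ℂ] D := A'.codRestrict D key2 with hAr'
  have key3 : ∀ v : D, A' (Ar v) = (v : lp (fun _ : ℤ => ℂ) 2) + q • A (Ar' v) := by
    rintro ⟨v, hv⟩
    rw [hD] at hv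
    induction hv using Submodule.span_induction with
    | mem y hy =>
        obtain ⟨n, rfl⟩ := hy
        have h1 : Ar ⟨lp.single 2 n (1 : ℂ), hD ▸ Submodule.subset_span ⟨n, rfl⟩⟩ =
            ((Real.sqrt (lam n) : ℝ) : ℂ) • (⟨lp.single 2 (n + 1) (1 : ℂ), hmem (n + 1)⟩ : D) :=
          Subtype.ext (hA n _)
        have h2 : Ar' ⟨lp.single 2 n (1 : ℂ), hD ▸ Submodule.subset_span ⟨n, rfl⟩⟩ =
            ((Real.sqrt (lam (n - 1)) : ℝ) : ℂ) • (⟨lp.single 2 (n - 1) (1 : ℂ), hmem (n - 1)⟩ : D) :=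
          Subtype.ext (hA'e n _)
        rw [h1, h2, map_smul, map_smul, hA'e (n + 1) (hmem (n + 1)), add_sub_cancel_right]
        have h3 : A ⟨lp.single 2 (n - 1) (1 : ℂ), hmem (n - 1)⟩ =
            ((Real.sqrt (lam (n - 1)) : ℝ) : ℂ) • lp.single 2 n (1 : ℂ) := by
          rw [hA (n - 1) (hmem (n - 1)), sub_add_cancel]
        rw [h3, smul_smul, smul_smul, ← Complex.ofReal_mul, ← Complex.ofReal_mul,
          Real.mul_self_sqrt (hlam_pos n).le, Real.mul_self_sqrt (hlam_pos (n - 1)).le]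
        have h4 : q • (((lam (n - 1) : ℝ) : ℂ) • (lp.single 2 n (1 : ℂ) : lp (fun _ : ℤ => ℂ) 2)) =
            (((q * lam (n - 1) : ℝ) : ℂ)) • lp.single 2 n (1 : ℂ) := by
          rw [Complex.ofReal_mul, ← smul_smul,
            ← algebraMap_smul ℂ q (((lam (n - 1) : ℝ) : ℂ) • (lp.single 2 n (1 : ℂ) : lp (fun _ : ℤ => ℂ) 2)),
            Complex.coe_algebraMap]
        rw [h4, hrec n]
        push_cast
        rw [add_smul, one_smul]
    | zero =>
        have : (⟨0, (hD ▸ Submodule.zero_mem _ : (0:lp (fun _ : ℤ => ℂ) 2) ∈ D)⟩ : D) = 0 := rfl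
        rw [this]
        simp
    | add y z hy hz ihy ihz =>
        have e1 : (⟨y + z, _⟩ : D) = ⟨y, hD ▸ hy⟩ + ⟨z, hD ▸ hz⟩ := rfl
        rw [e1, map_add, map_add, map_add, map_add, ihy _, ihz _]
        rw [Submodule.coe_add, smul_add]
        abel
    | smul c y hy ihy =>
        have e1 : (⟨c • y, _⟩ : D) = c • ⟨y, hD ▸ hy⟩ := rfl
        rw [e1, map_smul, map_smul, map_smul, map_smul, ihy _]
        rw [Submodule.coe_smul, smul_add, smul_comm q c]
  refine ⟨key1, key2, fun v hAv hA'v => key3 v, ?_⟩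
  -- Part 4
  intro C
  have hc : 0 < x - 1 / (1 - q) := by linarith
  obtain ⟨m, hm⟩ := pow_unbounded_of_one_lt ((max C 0) ^ 2 / (x - 1 / (1 - q)))
    ((one_lt_inv₀ hq0).2 hq1)
  refine ⟨-(m : ℤ), hmem _, ?_⟩
  rw [hA _ (hmem _)]
  have hnorm : ‖((Real.sqrt (lam (-(m:ℤ))) : ℝ) : ℂ) • (lp.single 2 (-(m:ℤ) + 1) (1 : ℂ) : lp (fun _ : ℤ => ℂ) 2)‖ =
      Real.sqrt (lam (-(m:ℤ))) := by
    have h5 : ‖(lp.single 2 (-(m:ℤ) + 1) (1 : ℂ) : lp (fun _ : ℤ => ℂ) 2)‖ = 1 := by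
      simpa using lp.norm_single (p := 2) (E := fun _ : ℤ => ℂ)
        (by norm_num) (fun _ => (1 : ℂ)) (-(m:ℤ) + 1)
    rw [norm_smul, Complex.norm_real, Real.norm_eq_abs,
      abs_of_nonneg (Real.sqrt_nonneg _), h5, mul_one]
  rw [hnorm]
  have hq' : q ^ (-(m:ℤ)) = (q⁻¹) ^ m := by
    rw [zpow_neg, ← zpow_natCast, ← inv_zpow, zpow_natCast]
  have hlt : (max C 0) ^ 2 < lam (-(m:ℤ)) := by
    rw [hlam_eq, hq']
    have h1 : (max C 0) ^ 2 < (q⁻¹) ^ m * (x - 1 / (1 - q)) := (div_lt_iff₀ hc).1 hm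
    have h2 : 0 < 1 / (1 - q) := by positivity
    linarith
  calc C ≤ max C 0 := le_max_left _ _
    _ < Real.sqrt (lam (-(m:ℤ))) := (Real.lt_sqrt (le_max_right _ _)).2 hlt
end

section
/- Let n ≥ 1, q ∈ (0,1). Let Λ be the set of finite words over {1,…,n} (including the empty word), and let H = ℓ²(Λ) with orthonormal basis (e_α)_{α∈Λ}. For a nonempty word α let m_k(α) be the length of the maximal prefix of α consisting entirely of the letter k, and set m_k(∅) = 0. Define bounded operators A_k on H by A_k e_α = √((1 - q^{m_k(kα)})/(1-q)) e_{kα}, where kα denotes prepending k to α. Then the family (A_k) satisfies A_k* A_k = 1 + q A_k A_k* and A_k* A_l = 0 for k ≠ l (the Fock representation of the q-deformed Cuntz algebra O_n^q). -/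
open ContinuousLinearMap

local notation "⟪" x ", " y "⟫" => @inner ℂ _ _ x y


set_option synthInstance.maxHeartbeats 400000 in
private lemma aux_dense (ι : Type*) [DecidableEq ι] :
    Dense ((Submodule.span ℂ (Set.range fun i : ι => lp.single 2 i (1 : ℂ)) :
      Submodule ℂ (lp (fun _ : ι => ℂ) 2)) : Set (lp (fun _ : ι => ℂ) 2)) := by
  classical
  intro f
  have hs : HasSum (fun i => lp.single 2 i (f i)) f :=
    lp.hasSum_single ENNReal.ofNat_ne_top f
  refine mem_closure_of_tendsto hs (Filter.Eventually.of_forall fun s => ?_)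
  refine Submodule.sum_mem _ fun i _ => ?_
  have h1 : lp.single (E := fun _ : ι => ℂ) 2 i (f i) = (f i : ℂ) • lp.single (E := fun _ : ι => ℂ) 2 i (1 : ℂ) := by
    rw [← lp.single_smul]; simp
  rw [h1]
  exact Submodule.smul_mem _ _ (Submodule.subset_span ⟨i, rfl⟩)

set_option synthInstance.maxHeartbeats 400000 in
private lemma aux_ext (ι : Type*) [DecidableEq ι]
    (T S : lp (fun _ : ι => ℂ) 2 →L[ℂ] lp (fun _ : ι => ℂ) 2)
    (h : ∀ i, T (lp.single 2 i (1 : ℂ)) = S (lp.single 2 i (1 : ℂ))) : T = S := by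
  refine ContinuousLinearMap.ext_on (aux_dense ι) ?_
  rintro _ ⟨i, rfl⟩
  exact h i

set_option maxHeartbeats 1000000 in
theorem stmt_17 (n : ℕ) (hn : 1 ≤ n) (q : ℝ) (hq0 : 0 < q) (hq1 : q < 1)
    (mk : Fin n → List (Fin n) → ℕ)
    (hmk : ∀ (k : Fin n) (α : List (Fin n)),
      mk k α = (α.takeWhile (fun a => a = k)).length)
    (A : Fin n → (lp (fun _ : List (Fin n) => ℂ) 2 →L[ℂ]
        lp (fun _ : List (Fin n) => ℂ) 2))
    (hA : ∀ (k : Fin n) (α : List (Fin n)),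
      A k (lp.single 2 α (1 : ℂ)) =
        ((Real.sqrt ((1 - q ^ mk k (k :: α)) / (1 - q)) : ℝ) : ℂ) •
          lp.single 2 (k :: α) (1 : ℂ)) :
    (∀ k : Fin n, adjoint (A k) * A k = 1 + q • (A k * adjoint (A k))) ∧
    (∀ k l : Fin n, k ≠ l → adjoint (A k) * A l = 0) := by
  classical
  set H := lp (fun _ : List (Fin n) => ℂ) 2 with hH
  set e : List (Fin n) → H := fun α => lp.single 2 α (1 : ℂ) with he
  -- basic coefficient facts
  have hq1' : (0:ℝ) < 1 - q := by linarith
  have hmk_cons : ∀ (k : Fin n) (α : List (Fin n)), mk k (k :: α) = mk k α + 1 := by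
    intro k α
    simp [hmk, List.takeWhile_cons, Nat.add_comm]
  set c : Fin n → List (Fin n) → ℝ :=
    fun k α => Real.sqrt ((1 - q ^ (mk k α + 1)) / (1 - q)) with hc
  have hAe : ∀ (k : Fin n) (α : List (Fin n)),
      A k (e α) = (c k α : ℂ) • e (k :: α) := by
    intro k α
    simpa [he, hc, hmk_cons] using hA k α
  have hcsq : ∀ (k : Fin n) (α : List (Fin n)),
      (c k α) ^ 2 = (1 - q ^ (mk k α + 1)) / (1 - q) := by
    intro k α
    rw [hc, Real.sq_sqrt]
    apply div_nonneg _ (le_of_lt hq1')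
    have : q ^ (mk k α + 1) ≤ 1 := pow_le_one₀ hq0.le hq1.le
    linarith
  -- coordinate evaluation via inner products
  have hcoord : ∀ (f : H) (α : List (Fin n)), ⟪e α, f⟫ = f α := by
    intro f α
    rw [he]
    rw [lp.inner_single_left]
    simp [RCLike.inner_apply]
  -- vectors are determined by inner products with the e α
  have hvec : ∀ x y : H, (∀ α, ⟪e α, x⟫ = ⟪e α, y⟫) → x = y := by
    intro x y h
    apply lp.ext
    funext α
    have := h α
    rwa [hcoord, hcoord] at this
  -- adjoint values
  have hinner_ee : ∀ (α β : List (Fin n)),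
      ⟪e α, e β⟫ = if α = β then 1 else 0 := by
    intro α β
    rw [hcoord, he]
    by_cases hx : α = β
    · simp [hx, lp.single_apply_self]
    · simp [lp.single_apply_ne _ _ _ hx, hx]
  have hadj_coord : ∀ (k : Fin n) (β α : List (Fin n)),
      ⟪e α, adjoint (A k) (e β)⟫ = (c k α : ℂ) * (if (k :: α) = β then 1 else 0) := by
    intro k β α
    rw [ContinuousLinearMap.adjoint_inner_right, hAe, inner_smul_left, hinner_ee]
    simp [Complex.conj_ofReal]
  have hadj1 : ∀ (k : Fin n) (γ : List (Fin n)),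
      adjoint (A k) (e (k :: γ)) = (c k γ : ℂ) • e γ := by
    intro k γ
    apply hvec
    intro α
    rw [hadj_coord, inner_smul_right, hinner_ee]
    by_cases hx : α = γ
    · subst hx; simp
    · have : ¬ (k :: α = k :: γ) := by simpa using hx
      simp [hx, this]
  have hadj2 : ∀ (k : Fin n) (β : List (Fin n)), (∀ γ, β ≠ k :: γ) →
      adjoint (A k) (e β) = 0 := by
    intro k β hβ
    apply hvec
    intro α
    rw [hadj_coord]
    have : ¬ (k :: α = β) := fun h => hβ α h.symm
    simp [this]
  -- extensionality along e
  have hext : ∀ T S : ↥H →L[ℂ] ↥H, (∀ α, T (e α) = S (e α)) → T = S :=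
    fun T S h => aux_ext _ T S h
  constructor
  · intro k
    apply hext
    intro α
    have lhs : (adjoint (A k) * A k) (e α) = ((c k α : ℂ) ^ 2) • e α := by
      rw [ContinuousLinearMap.mul_apply, hAe, map_smul, hadj1, smul_smul, sq]
    rw [lhs]
    rw [ContinuousLinearMap.add_apply, ContinuousLinearMap.one_apply,
      ContinuousLinearMap.smul_apply, ContinuousLinearMap.mul_apply]
    rcases α with _ | ⟨h, t⟩
    · -- empty word
      have : adjoint (A k) (e []) = 0 := hadj2 k [] (fun γ => by simp)
      rw [this, map_zero, smul_zero, add_zero]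
      have hm : mk k [] = 0 := by simp [hmk]
      have : (c k [] : ℝ) ^ 2 = 1 := by
        rw [hcsq, hm]; field_simp; norm_num
      rw [← Complex.ofReal_pow, this]
      simp
    · by_cases hk : h = k
      · subst hk
        rw [hadj1, map_smul, hAe, smul_smul]
        have e1 : ((c h (h::t) : ℂ))^2 = (((1 - q ^ (mk h t + 1 + 1)) / (1 - q) : ℝ) : ℂ) := by
          rw [← Complex.ofReal_pow, hcsq, hmk_cons]
        have e2 : ((c h t : ℂ)) * (c h t : ℂ) = (((1 - q ^ (mk h t + 1)) / (1 - q) : ℝ) : ℂ) := by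
          rw [← Complex.ofReal_mul, ← sq, hcsq]
        have hsc : ((1 - q ^ (mk h t + 1 + 1)) / (1 - q) : ℝ)
            = 1 + q * ((1 - q ^ (mk h t + 1)) / (1 - q)) := by
          have hne : (1 - q) ≠ 0 := ne_of_gt hq1'
          field_simp
          ring
        rw [e1, e2, hsc]
        match_scalars
        push_cast [Complex.coe_algebraMap]
        ring
      · have : adjoint (A k) (e (h :: t)) = 0 := by
          apply hadj2
          intro γ hγ
          exact hk (List.cons.inj hγ).1
        rw [this, map_zero, smul_zero, add_zero]
        have hm : mk k (h :: t) = 0 := by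
          simp [hmk, List.takeWhile_cons, hk]
        have : (c k (h::t) : ℝ) ^ 2 = 1 := by
          rw [hcsq, hm]; field_simp; norm_num
        rw [← Complex.ofReal_pow, this]
        simp
  · intro k l hkl
    apply hext
    intro α
    rw [ContinuousLinearMap.mul_apply, hAe, map_smul]
    have : adjoint (A k) (e (l :: α)) = 0 := by
      apply hadj2
      intro γ hγ
      exact hkl ((List.cons.inj hγ).1).symm
    rw [this]
    simp
end
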